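/- Let $n \geq 3$, $N = 2^n - 1$, and for each prime $p$ let $E_n$ be the set of pairs $(k,\ell)$ of distinct elements of $\{1,\dots,N-1\}$ incomparable for $\preceq$. Then for real $x$ with $0 < x < 1$: $\sum_{(\nu_1,\dots,\nu_N) \in \mathbb{Z}_{\geq 0}^N,\ \nu_k\nu_\ell = 0\ \forall (k,\ell)\in E_n} x^{\nu_1 + \cdots + \nu_N} = \sum_{(k_1,\dots,k_n)\in\mathbb{Z}_{\geq 0}^n} x^{\max_j k_j}$. -/

import Mathlib

/-!
A chain of nonempty subsets of the coordinates, taken with multiplicities `ν`, determines the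
tuple `k j = ∑_{s ∋ j} ν s`, whose maximum is `∑ ν`. Conversely a tuple `k` is recovered from its
level sets `{j | t ≤ k j}`, `1 ≤ t ≤ max k`, which form a decreasing chain of nonempty sets: the
multiplicity of `s` is the number of levels at which the level set is `s`. On chains the two maps
are inverse by counting: the `ν s` levels just below the total weight of the sets containing `s`
all have level set `s`, while the level counts add up to `max k ≤ ∑ ν`. Encoding nonempty subsets
of `Fin n` by the binary digits of `1, …, 2^n - 1` turns domination into inclusion.
-/

/-- `j`-th binary digit (zero-based) of `h`, as `0` or `1`; `epsb h (j-1)` is the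
paper's `ε_j(h)`. -/
def epsb (h j : ℕ) : ℕ := if h.testBit j then 1 else 0

/-- Domination order: every binary digit of `h` (among the first `n`) is at most that of `ℓ`. -/
def Dom (n h ℓ : ℕ) : Prop := ∀ j < n, epsb h j ≤ epsb ℓ j

/-- A tuple indexed by `Fin (2^n - 1)` (index `h` standing for `h+1 ∈ {1,…,2^n-1}`)
is reduced if entries at incomparable indices are coprime. -/
def Reduced (n : ℕ) (z : Fin (2^n - 1) → ℕ) : Prop :=
  ∀ h ℓ : Fin (2^n - 1), ¬ Dom n (h.1+1) (ℓ.1+1) → ¬ Dom n (ℓ.1+1) (h.1+1) →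
    Nat.gcd (z h) (z ℓ) = 1

open Finset Function

namespace ChainTuple

variable {ι P : Type*}

section LevelSet

variable [Fintype ι]

def levelSet (k : ι → ℕ) (t : ℕ) : Finset ι := {j | t ≤ k j}

lemma mem_levelSet {k : ι → ℕ} {t : ℕ} {j : ι} : j ∈ levelSet k t ↔ t ≤ k j := by
  simp [levelSet]

lemma levelSet_antitone (k : ι → ℕ) : Antitone (levelSet k) :=
  fun _ _ hst _ hj => mem_levelSet.2 (hst.trans (mem_levelSet.1 hj))

lemma levelSet_nonempty {k : ι → ℕ} {t : ℕ} (ht : t ∈ Icc 1 (univ.sup k)) :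
    (levelSet k t).Nonempty := by
  rw [mem_Icc] at ht
  obtain ⟨j, -, hj⟩ := (Finset.le_sup_iff ht.1).1 ht.2
  exact ⟨j, mem_levelSet.2 hj⟩

end LevelSet

section ToTuple

variable [DecidableEq ι] [Fintype P] (e : P ≃ {s : Finset ι // s.Nonempty})

def toTuple (ν : P → ℕ) (j : ι) : ℕ := ∑ p, if j ∈ (e p : Finset ι) then ν p else 0

def upperSum (ν : P → ℕ) (p : P) : ℕ := ∑ q, if (e p : Finset ι) ⊆ e q then ν q else 0

lemma toTuple_le_sum (ν : P → ℕ) (j : ι) : toTuple e ν j ≤ ∑ p, ν p :=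
  sum_le_sum fun p _ => by split_ifs <;> simp

lemma self_le_upperSum (ν : P → ℕ) (p : P) : ν p ≤ upperSum e ν p :=
  calc ν p = if (e p : Finset ι) ⊆ e p then ν p else 0 := (if_pos subset_rfl).symm
    _ ≤ upperSum e ν p :=
      single_le_sum (f := fun q => if (e p : Finset ι) ⊆ e q then ν q else 0)
        (fun _ _ => Nat.zero_le _) (mem_univ p)

lemma upperSum_le_toTuple (ν : P → ℕ) {p : P} {j : ι} (hj : j ∈ (e p : Finset ι)) :
    upperSum e ν p ≤ toTuple e ν j :=
  sum_le_sum fun q _ => by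
    split_ifs with hpq hjq hjq
    exacts [le_rfl, absurd (hpq hj) hjq, Nat.zero_le _, le_rfl]

variable {e} in
lemma toTuple_add_le_upperSum {ν : P → ℕ}
    (hν : IsChain (fun p q => (e p : Finset ι) ⊆ e q) (support ν)) {p : P} (hp : ν p ≠ 0)
    {j : ι} (hj : j ∉ (e p : Finset ι)) :
    toTuple e ν j + ν p ≤ upperSum e ν p := by
  classical
  rw [toTuple, ← Fintype.sum_ite_eq' p ν, ← sum_add_distrib]
  refine sum_le_sum fun q _ => ?_
  by_cases hqp : q = p
  · subst hqp; simp [hj]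
  by_cases hjq : j ∈ (e q : Finset ι) ∧ ν q ≠ 0
  · -- a block containing `j ∉ e p` cannot lie below `e p`, so it lies above it
    have hpq : (e p : Finset ι) ⊆ e q :=
      (hν hp hjq.2 (Ne.symm hqp)).resolve_right fun hqp' => hj (hqp' hjq.1)
    simp [hpq, hjq.1, hqp]
  · rw [not_and_or, not_not] at hjq
    rcases hjq with hjq | hjq <;> simp [hjq, hqp]

end ToTuple

variable [Fintype ι] [DecidableEq ι] (e : P ≃ {s : Finset ι // s.Nonempty})

def ofTuple (k : ι → ℕ) (p : P) : ℕ := #{t ∈ Icc 1 (univ.sup k) | levelSet k t = e p}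

lemma isChain_support_ofTuple (k : ι → ℕ) :
    IsChain (fun p q => (e p : Finset ι) ⊆ e q) (support (ofTuple e k)) := by
  have hlevel : ∀ p ∈ support (ofTuple e k), ∃ t, levelSet k t = e p := fun p hp => by
    obtain ⟨t, ht⟩ := card_ne_zero.1 hp
    exact ⟨t, (mem_filter.1 ht).2⟩
  intro p hp q hq _
  obtain ⟨t, ht⟩ := hlevel p hp
  obtain ⟨t', ht'⟩ := hlevel q hq
  rcases le_total t t' with h | h
  · exact .inr (by simpa only [← ht, ← ht'] using levelSet_antitone k h)
  · exact .inl (by simpa only [← ht, ← ht'] using levelSet_antitone k h)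

variable [Fintype P]

variable {e} in
lemma card_eq_sum_card_levelSet_eq {k : ι → ℕ} {s : Finset ℕ}
    (hs : ∀ t ∈ s, (levelSet k t).Nonempty) :
    #s = ∑ p, #{t ∈ s | levelSet k t = e p} := by
  let blocks : P ↪ Finset ι := ⟨fun p => e p, Subtype.val_injective.comp e.injective⟩
  rw [card_eq_sum_card_fiberwise (f := levelSet k) (t := univ.map blocks), sum_map]
  · rfl
  · intro t ht
    simpa [blocks] using ⟨e.symm ⟨_, hs t ht⟩, by simp⟩

lemma sum_ofTuple (k : ι → ℕ) : ∑ p, ofTuple e k p = univ.sup k := by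
  unfold ofTuple
  rw [← card_eq_sum_card_levelSet_eq (fun _ => levelSet_nonempty), Nat.card_Icc,
    Nat.add_sub_cancel]

lemma toTuple_ofTuple (k : ι → ℕ) : toTuple e (ofTuple e k) = k := by
  funext j
  have hlevels : {t ∈ Icc 1 (univ.sup k) | j ∈ levelSet k t} = Icc 1 (k j) := by
    ext t
    have hkj := le_sup (f := k) (mem_univ j)
    simp only [mem_filter, mem_Icc, mem_levelSet]
    omega
  calc toTuple e (ofTuple e k) j
      = ∑ p, #{t ∈ {t ∈ Icc 1 (univ.sup k) | j ∈ levelSet k t} | levelSet k t = e p} := by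
        refine sum_congr rfl fun p _ => ?_
        rw [filter_filter, ofTuple]
        split_ifs with hj
        · congr 1
          exact filter_congr fun t _ => ⟨fun h => ⟨h ▸ hj, h⟩, And.right⟩
        · exact (card_eq_zero.2 (filter_false_of_mem fun t _ ⟨hmem, heq⟩ => hj (heq ▸ hmem))).symm
    _ = k j := by
        rw [← card_eq_sum_card_levelSet_eq fun t ht => ⟨j, (mem_filter.1 ht).2⟩, hlevels,
          Nat.card_Icc, Nat.add_sub_cancel]

section Chain

variable {e} {ν : P → ℕ} (hν : IsChain (fun p q => (e p : Finset ι) ⊆ e q) (support ν))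
include hν

lemma levelSet_toTuple {p : P} (hp : ν p ≠ 0) {t : ℕ}
    (ht : t ∈ Ioc (upperSum e ν p - ν p) (upperSum e ν p)) :
    levelSet (toTuple e ν) t = e p := by
  rw [mem_Ioc] at ht
  ext j
  rw [mem_levelSet]
  by_cases hj : j ∈ (e p : Finset ι)
  · simpa [hj] using ht.2.trans (upperSum_le_toTuple e ν hj)
  · have := toTuple_add_le_upperSum hν hp hj
    simp only [hj, iff_false, not_le]
    omega

lemma le_ofTuple_toTuple (p : P) : ν p ≤ ofTuple e (toTuple e ν) p := by
  rcases eq_or_ne (ν p) 0 with hp | hp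
  · simp [hp]
  obtain ⟨j, hj⟩ := (e p).2
  have hU : upperSum e ν p ≤ univ.sup (toTuple e ν) :=
    (upperSum_le_toTuple e ν hj).trans (le_sup (mem_univ j))
  have hνU := self_le_upperSum e ν p
  calc ν p = #(Ioc (upperSum e ν p - ν p) (upperSum e ν p)) := by rw [Nat.card_Ioc]; omega
    _ ≤ ofTuple e (toTuple e ν) p := card_le_card fun t ht =>
        mem_filter.2 ⟨by rw [mem_Ioc] at ht; rw [mem_Icc]; omega, levelSet_toTuple hν hp ht⟩

lemma sup_toTuple : univ.sup (toTuple e ν) = ∑ p, ν p :=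
  le_antisymm (Finset.sup_le fun j _ => toTuple_le_sum e ν j)
    ((sum_le_sum fun p _ => le_ofTuple_toTuple hν p).trans (sum_ofTuple e _).le)

lemma ofTuple_toTuple : ofTuple e (toTuple e ν) = ν := by
  funext p
  refine ((sum_eq_sum_iff_of_le fun p _ => le_ofTuple_toTuple hν p).1 ?_ p (mem_univ p)).symm
  rw [sum_ofTuple, sup_toTuple hν]

end Chain

def chainEquiv :
    {ν : P → ℕ // IsChain (fun p q => (e p : Finset ι) ⊆ e q) (support ν)} ≃ (ι → ℕ) where
  toFun ν := toTuple e ν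
  invFun k := ⟨ofTuple e k, isChain_support_ofTuple e k⟩
  left_inv ν := Subtype.ext (ofTuple_toTuple ν.2)
  right_inv := toTuple_ofTuple e

end ChainTuple

def bitSet (n a : ℕ) : Finset (Fin n) := {j | a.testBit j}

lemma mem_bitSet {n a : ℕ} {j : Fin n} : j ∈ bitSet n a ↔ a.testBit j := by
  simp [bitSet]

lemma epsb_le_epsb_iff {a b j : ℕ} : epsb a j ≤ epsb b j ↔ (a.testBit j → b.testBit j) := by
  unfold epsb; split_ifs <;> simp_all

lemma dom_iff_bitSet_subset {n a b : ℕ} : Dom n a b ↔ bitSet n a ⊆ bitSet n b := by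
  simp only [Dom, epsb_le_epsb_iff, subset_iff, mem_bitSet, Fin.forall_iff]

lemma dom_two_pow_sub_one (n a : ℕ) : Dom n a (2 ^ n - 1) := by
  rw [dom_iff_bitSet_subset]
  intro j _
  simp [mem_bitSet, Nat.testBit_two_pow_sub_one]

lemma testBit_eq_false_of_lt_two_pow {n a i : ℕ} (ha : a < 2 ^ n) (hi : n ≤ i) :
    a.testBit i = false :=
  Nat.testBit_lt_two_pow (ha.trans_le (Nat.pow_le_pow_right two_pos hi))

lemma eq_of_bitSet_eq {n a b : ℕ} (ha : a < 2 ^ n) (hb : b < 2 ^ n)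
    (h : bitSet n a = bitSet n b) : a = b := by
  refine Nat.eq_of_testBit_eq fun i => ?_
  by_cases hi : i < n
  · simpa [mem_bitSet] using congrArg (⟨i, hi⟩ ∈ ·) h
  · rw [testBit_eq_false_of_lt_two_pow ha (not_lt.1 hi),
      testBit_eq_false_of_lt_two_pow hb (not_lt.1 hi)]

lemma bitSet_nonempty {n a : ℕ} (h0 : a ≠ 0) (ha : a < 2 ^ n) : (bitSet n a).Nonempty := by
  obtain ⟨i, hi⟩ := Nat.exists_testBit_of_ne_zero h0
  have hin : i < n := by
    by_contra hni
    rw [testBit_eq_false_of_lt_two_pow ha (not_lt.1 hni)] at hi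
    exact Bool.false_ne_true hi
  exact ⟨⟨i, hin⟩, mem_bitSet.2 hi⟩

/-- Index `h` stands for the number `h + 1 ∈ {1, …, 2^n - 1}`. -/
noncomputable def nonemptyBitSetEquiv (n : ℕ) :
    Fin (2 ^ n - 1) ≃ {s : Finset (Fin n) // s.Nonempty} :=
  Equiv.ofBijective (fun h => ⟨bitSet n (h.1 + 1), bitSet_nonempty h.1.succ_ne_zero (by omega)⟩) <|
    (Fintype.bijective_iff_injective_and_card _).2
      ⟨fun h ℓ hhℓ => Fin.ext <| Nat.succ_injective <|
          eq_of_bitSet_eq (by omega) (by omega) (congrArg Subtype.val hhℓ),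
        by simp [Fintype.card_subtype, nonempty_iff_ne_empty, filter_ne']⟩

@[simp]
lemma coe_nonemptyBitSetEquiv (n : ℕ) (h : Fin (2 ^ n - 1)) :
    (nonemptyBitSetEquiv n h : Finset (Fin n)) = bitSet n (h.1 + 1) :=
  rfl

lemma incomparable_mul_eq_zero_iff_isChain (n : ℕ) (ν : Fin (2 ^ n - 1) → ℕ) :
    (∀ k ℓ : Fin (2^n - 1), k.1 + 1 ≤ 2^n - 2 → ℓ.1 + 1 ≤ 2^n - 2 → k ≠ ℓ →
      ¬ Dom n (k.1+1) (ℓ.1+1) → ¬ Dom n (ℓ.1+1) (k.1+1) → ν k * ν ℓ = 0) ↔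
    IsChain (fun h ℓ => (nonemptyBitSetEquiv n h : Finset (Fin n)) ⊆ nonemptyBitSetEquiv n ℓ)
      (support ν) := by
  simp only [coe_nonemptyBitSetEquiv, ← dom_iff_bitSet_subset]
  -- the excluded index `2^n - 2` encodes `2^n - 1`, which dominates everything
  have hbelow_top : ∀ (h : Fin (2 ^ n - 1)) (a : ℕ), ¬ Dom n a (h.1 + 1) → h.1 + 1 ≤ 2^n - 2 :=
    fun h a hna => by
      by_contra htop
      exact hna (by rw [show h.1 + 1 = 2 ^ n - 1 by omega]; exact dom_two_pow_sub_one n a)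
  constructor
  · intro H k hk ℓ hℓ hkℓ
    by_contra! hc
    exact mul_ne_zero hk hℓ (H k ℓ (hbelow_top k _ hc.2) (hbelow_top ℓ _ hc.1) hkℓ hc.1 hc.2)
  · intro H k ℓ _ _ hkℓ h₁ h₂
    by_contra hc
    rcases H (left_ne_zero_of_mul hc) (right_ne_zero_of_mul hc) hkℓ with h | h
    exacts [h₁ h, h₂ h]

theorem statement11_general (n : ℕ) (x : ℝ) :
    ∑' ν : {ν : Fin (2^n - 1) → ℕ //
        ∀ k ℓ : Fin (2^n - 1), k.1 + 1 ≤ 2^n - 2 → ℓ.1 + 1 ≤ 2^n - 2 → k ≠ ℓ →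
          ¬ Dom n (k.1+1) (ℓ.1+1) → ¬ Dom n (ℓ.1+1) (k.1+1) → ν k * ν ℓ = 0},
        x ^ (∑ h, ν.1 h) =
      ∑' k : Fin n → ℕ, x ^ (Finset.univ.sup k) := by
  let e := (Equiv.subtypeEquivRight (incomparable_mul_eq_zero_iff_isChain n)).trans
    (ChainTuple.chainEquiv (nonemptyBitSetEquiv n))
  rw [← e.tsum_eq]
  refine tsum_congr fun ν => ?_
  rw [show e ν = ChainTuple.toTuple _ ν.1 from rfl,
    ChainTuple.sup_toTuple ((incomparable_mul_eq_zero_iff_isChain n ν.1).1 ν.2)]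

/-- For `n ≥ 3`, `N = 2^n - 1` and `0 < x < 1`, the sum of `x^{ν₁+⋯+ν_N}` over
tuples `ν ∈ ℤ_{≥0}^N` with `ν_k ν_ℓ = 0` for all pairs `(k,ℓ)` of distinct elements
of `{1,…,N-1}` incomparable for the domination order, equals the sum of
`x^{max_j k_j}` over `n`-tuples of nonnegative integers. -/
theorem statement11 (n : ℕ) (hn : 3 ≤ n) (x : ℝ) (hx0 : 0 < x) (hx1 : x < 1) :
    ∑' ν : {ν : Fin (2^n - 1) → ℕ //
        ∀ k ℓ : Fin (2^n - 1), k.1 + 1 ≤ 2^n - 2 → ℓ.1 + 1 ≤ 2^n - 2 → k ≠ ℓ →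
          ¬ Dom n (k.1+1) (ℓ.1+1) → ¬ Dom n (ℓ.1+1) (k.1+1) → ν k * ν ℓ = 0},
        x ^ (∑ h, ν.1 h) =
      ∑' k : Fin n → ℕ, x ^ (Finset.univ.sup k) :=
  statement11_general n x
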